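/- arXiv:1211.5309 — 2 statements merged into one kernel-verified Lean document; each statement's English description precedes it below -/
import Mathlib

section
/- Let (S_n) be a random walk on ℝ with i.i.d. increments, S_0 = x under P_x, and let ρ(n) := P_0(min_{0≤i≤n} S_i ≥ 0). Then for every x ≥ 0 and n ≥ 1: P_x(min_{0≤i≤n} S_i ≥ 0) = ρ(n) + ∑_{k=1}^n P_x(min_{0≤j≤k−1} S_j > S_k ≥ 0) · ρ(n−k). -/
/-!
Split the event `{S_i ≥ 0 for all i ≤ n}` according to the first time `k ≤ n` at which the walk
attains its minimum over `[0, n]`. At that time the walk lies strictly below all earlier values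
and is nonnegative, an event determined by `X_0, …, X_{k-1}`; after it, the walk never drops
below `S_k`, an event determined by the shifted increments `X_k, X_{k+1}, …`. The two are
independent, and the shifted increments have the law of the original ones, so the second event
has probability `ρ(n - k)`. For `k = 0` the first event is sure because `x ≥ 0`.
-/

open MeasureTheory Finset
open scoped ENNReal

section FirstArgmin

variable {α : Type*} [LinearOrder α]

/-- For `k ≤ n`: `k` is the first time at which `s` attains its minimum over `[0, n]`. -/
def IsFirstArgmin (s : ℕ → α) (n k : ℕ) : Prop :=
  (∀ j < k, s k < s j) ∧ ∀ j, k ≤ j → j ≤ n → s k ≤ s j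

lemma exists_isFirstArgmin (s : ℕ → α) (n : ℕ) : ∃ k ≤ n, IsFirstArgmin s n k := by
  classical
  have hmin : ∃ k, k ≤ n ∧ ∀ j ≤ n, s k ≤ s j := by
    obtain ⟨k, hk, hmin⟩ := (range (n + 1)).exists_min_image s nonempty_range_add_one
    exact ⟨k, mem_range_succ_iff.1 hk, fun j hj => hmin j (mem_range.2 (by omega))⟩
  obtain ⟨hkn, hkmin⟩ := Nat.find_spec hmin
  refine ⟨Nat.find hmin, hkn, fun j hj => ?_, fun j _ hjn => hkmin j hjn⟩
  by_contra! hle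
  exact Nat.find_min hmin hj ⟨by omega, fun i hi => hle.trans (hkmin i hi)⟩

lemma IsFirstArgmin.eq {s : ℕ → α} {n k l : ℕ} (hk : IsFirstArgmin s n k)
    (hl : IsFirstArgmin s n l) (hkn : k ≤ n) (hln : l ≤ n) : k = l := by
  by_contra! hne
  rcases hne.lt_or_gt with hkl | hlk
  · exact (hl.1 k hkl).not_ge (hk.2 l hkl.le hln)
  · exact (hk.1 l hlk).not_ge (hl.2 k hlk.le hkn)

lemma forall_le_le_iff_exists_isFirstArgmin (s : ℕ → α) (a : α) (n : ℕ) :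
    (∀ i ≤ n, a ≤ s i) ↔ ∃ k ≤ n, IsFirstArgmin s n k ∧ a ≤ s k := by
  refine ⟨fun h => ?_, fun ⟨k, _, hk, hak⟩ i hin => ?_⟩
  · obtain ⟨k, hkn, hk⟩ := exists_isFirstArgmin s n
    exact ⟨k, hkn, hk, h k hkn⟩
  · rcases lt_or_ge i k with hik | hki
    · exact hak.trans (hk.1 i hik).le
    · exact hak.trans (hk.2 i hki hin)

end FirstArgmin

namespace ProbabilityTheory

section Shift

variable {Ω β : Type*} [MeasurableSpace Ω] [mβ : MeasurableSpace β] {μ : Measure Ω}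
  {X : ℕ → Ω → β}

lemma iIndepFun.map_shift_eq (hmeas : ∀ i, Measurable (X i)) (hindep : iIndepFun X μ)
    (hident : ∀ i, IdentDistrib (X i) (X 0) μ μ) (k : ℕ) :
    μ.map (fun ω i => X (k + i) ω) = μ.map (fun ω i => X i ω) := by
  rw [(hindep.precomp (add_right_injective k)).map_fun_eq_infinitePi_map fun i => hmeas _,
    hindep.map_fun_eq_infinitePi_map hmeas]
  simp only [(hident _).map_eq]

lemma iIndepFun.measure_inter_preimage_shift (hmeas : ∀ i, Measurable (X i))
    (hindep : iIndepFun X μ) (hident : ∀ i, IdentDistrib (X i) (X 0) μ μ) {k : ℕ} {A : Set Ω}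
    (hA : MeasurableSet[⨆ i ∈ Set.Iio k, mβ.comap (X i)] A) {E : Set (ℕ → β)}
    (hE : MeasurableSet E) :
    μ (A ∩ (fun ω i => X (k + i) ω) ⁻¹' E) = μ A * μ ((fun ω i => X i ω) ⁻¹' E) := by
  have hindep_past_future : Indep (⨆ i ∈ Set.Iio k, mβ.comap (X i))
      (⨆ i ∈ Set.Ici k, mβ.comap (X i)) μ :=
    indep_iSup_of_disjoint (fun i => (hmeas i).comap_le) ((iIndepFun_iff_iIndep _ _ _).1 hindep)
      (Set.Iio_disjoint_Ici le_rfl)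
  have hshift : Measurable[⨆ i ∈ Set.Ici k, mβ.comap (X i)] fun ω i => X (k + i) ω :=
    @measurable_pi_lambda Ω ℕ (fun _ => β) (⨆ i ∈ Set.Ici k, mβ.comap (X i)) _ _ fun i =>
      (comap_measurable (X (k + i))).mono
        (le_iSup₂ (f := fun j (_ : j ∈ Set.Ici k) => mβ.comap (X j)) (k + i) (by simp)) le_rfl
  rw [(Indep_iff _ _ μ).1 hindep_past_future _ _ hA (hshift hE),
    ← Measure.map_apply (measurable_pi_lambda _ fun i => hmeas _) hE,
    hindep.map_shift_eq hmeas hident,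
    Measure.map_apply (measurable_pi_lambda _ hmeas) hE]

end Shift

section RandomWalk

variable {Ω : Type*}

def randomWalk (X : ℕ → Ω → ℝ) (x : ℝ) (n : ℕ) (ω : Ω) : ℝ := x + ∑ i ∈ range n, X i ω

lemma randomWalk_add (X : ℕ → Ω → ℝ) (x : ℝ) (k i : ℕ) (ω : Ω) :
    randomWalk X x (k + i) ω = randomWalk X x k ω + ∑ l ∈ range i, X (k + l) ω := by
  simp only [randomWalk, sum_range_add, add_assoc]

lemma setOf_isFirstArgmin_randomWalk (X : ℕ → Ω → ℝ) (x : ℝ) {n k : ℕ} (hkn : k ≤ n) :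
    {ω | IsFirstArgmin (randomWalk X x · ω) n k ∧ 0 ≤ randomWalk X x k ω} =
      {ω | (∀ j < k, randomWalk X x k ω < randomWalk X x j ω) ∧ 0 ≤ randomWalk X x k ω} ∩
        (fun ω i => X (k + i) ω) ⁻¹' {s | ∀ i ≤ n - k, 0 ≤ ∑ l ∈ range i, s l} := by
  ext ω
  have hmin : (∀ j, k ≤ j → j ≤ n → randomWalk X x k ω ≤ randomWalk X x j ω) ↔
      ∀ i ≤ n - k, 0 ≤ ∑ l ∈ range i, X (k + l) ω := by
    refine ⟨fun h i hi => ?_, fun h j hkj hjn => ?_⟩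
    · simpa [randomWalk_add] using h (k + i) (by omega) (by omega)
    · obtain ⟨i, rfl⟩ := Nat.exists_eq_add_of_le hkj
      simpa [randomWalk_add] using h i (by omega)
  simp only [IsFirstArgmin, Set.mem_ofPred_eq, Set.mem_inter_iff, Set.mem_preimage, ← hmin]
  tauto

lemma measurable_randomWalk_past (X : ℕ → Ω → ℝ) (x : ℝ) {j k : ℕ} (hjk : j ≤ k) :
    Measurable[⨆ i ∈ Set.Iio k, MeasurableSpace.comap (X i) inferInstance] (randomWalk X x j) :=
  measurable_const.add <| Finset.measurable_sum _ fun i hi => (comap_measurable (X i)).mono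
    (le_iSup₂ (f := fun l (_ : l ∈ Set.Iio k) => MeasurableSpace.comap (X l) inferInstance) i
      (by simp at hi ⊢; omega)) le_rfl

lemma measurableSet_strictRecord_nonneg_past (X : ℕ → Ω → ℝ) (x : ℝ) (k : ℕ) :
    MeasurableSet[⨆ i ∈ Set.Iio k, MeasurableSpace.comap (X i) inferInstance]
      {ω | (∀ j < k, randomWalk X x k ω < randomWalk X x j ω) ∧ 0 ≤ randomWalk X x k ω} := by
  have hk := measurable_randomWalk_past X x (le_refl k)
  simp only [Set.ofPred_and, Set.ofPred_forall]
  exact (MeasurableSet.iInter fun j => MeasurableSet.iInter fun hj =>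
    measurableSet_lt hk (measurable_randomWalk_past X x hj.le)).inter
    (measurableSet_le measurable_const hk)

end RandomWalk

lemma measurableSet_partialSums_nonneg (m : ℕ) :
    MeasurableSet {s : ℕ → ℝ | ∀ i ≤ m, 0 ≤ ∑ l ∈ range i, s l} := by
  simp only [Set.ofPred_forall]
  exact MeasurableSet.iInter fun i => MeasurableSet.iInter fun _ =>
    measurableSet_le measurable_const
      (Finset.measurable_sum _ fun l _ => measurable_pi_apply (X := fun _ : ℕ => ℝ) l)

variable {Ω : Type*} [MeasurableSpace Ω] {μ : Measure Ω} {X : ℕ → Ω → ℝ}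

lemma measure_isFirstArgmin_randomWalk (hmeas : ∀ i, Measurable (X i)) (hindep : iIndepFun X μ)
    (hident : ∀ i, IdentDistrib (X i) (X 0) μ μ) (x : ℝ) {n k : ℕ} (hkn : k ≤ n) :
    μ {ω | IsFirstArgmin (randomWalk X x · ω) n k ∧ 0 ≤ randomWalk X x k ω} =
      μ {ω | (∀ j < k, randomWalk X x k ω < randomWalk X x j ω) ∧ 0 ≤ randomWalk X x k ω} *
        μ {ω | ∀ i ≤ n - k, 0 ≤ randomWalk X 0 i ω} := by
  rw [setOf_isFirstArgmin_randomWalk X x hkn, hindep.measure_inter_preimage_shift hmeas hident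
    (measurableSet_strictRecord_nonneg_past X x k) (measurableSet_partialSums_nonneg (n - k))]
  simp [randomWalk, Set.preimage]

lemma measure_randomWalk_nonneg (hmeas : ∀ i, Measurable (X i)) (hindep : iIndepFun X μ)
    (hident : ∀ i, IdentDistrib (X i) (X 0) μ μ) (x : ℝ) (n : ℕ) :
    μ {ω | ∀ i ≤ n, 0 ≤ randomWalk X x i ω} = ∑ k ∈ range (n + 1),
      μ {ω | (∀ j < k, randomWalk X x k ω < randomWalk X x j ω) ∧ 0 ≤ randomWalk X x k ω} *
        μ {ω | ∀ i ≤ n - k, 0 ≤ randomWalk X 0 i ω} := by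
  have hdecomp : {ω | ∀ i ≤ n, 0 ≤ randomWalk X x i ω} = ⋃ k ∈ range (n + 1),
      {ω | IsFirstArgmin (randomWalk X x · ω) n k ∧ 0 ≤ randomWalk X x k ω} := by
    ext ω
    simp only [Set.mem_ofPred_eq, Set.mem_iUnion, mem_range_succ_iff, exists_prop,
      forall_le_le_iff_exists_isFirstArgmin (randomWalk X x · ω)]
  have hdisj : (range (n + 1) : Set ℕ).PairwiseDisjoint
      fun k => {ω | IsFirstArgmin (randomWalk X x · ω) n k ∧ 0 ≤ randomWalk X x k ω} :=
    fun k hk l hl hkl => Set.disjoint_left.2 fun ω hωk hωl =>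
      hkl (hωk.1.eq hωl.1 (mem_range_succ_iff.1 hk) (mem_range_succ_iff.1 hl))
  have hmeasurable : ∀ k ∈ range (n + 1), MeasurableSet
      {ω | IsFirstArgmin (randomWalk X x · ω) n k ∧ 0 ≤ randomWalk X x k ω} := by
    intro k hk
    rw [setOf_isFirstArgmin_randomWalk X x (mem_range_succ_iff.1 hk)]
    exact (iSup₂_le (fun i _ => (hmeas i).comap_le) _ (measurableSet_strictRecord_nonneg_past X x k)).inter
      ((measurable_pi_lambda _ fun i => hmeas _) (measurableSet_partialSums_nonneg _))
  rw [hdecomp, measure_biUnion_finset hdisj hmeasurable]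
  exact sum_congr rfl fun k hk => measure_isFirstArgmin_randomWalk hmeas hindep hident x
    (mem_range_succ_iff.1 hk)

end ProbabilityTheory

theorem stmt6_general {Ω : Type*} [MeasurableSpace Ω] (μ : Measure Ω) [IsProbabilityMeasure μ]
    (X : ℕ → Ω → ℝ) (hmeas : ∀ i, Measurable (X i))
    (hindep : ProbabilityTheory.iIndepFun (m := fun _ => Real.measurableSpace) X μ)
    (hident : ∀ i, ProbabilityTheory.IdentDistrib (X i) (X 0) μ μ)
    (S : ℝ → ℕ → Ω → ℝ) (hS : ∀ x n ω, S x n ω = x + ∑ i ∈ Finset.range n, X i ω)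
    (ρ : ℕ → ℝ≥0∞) (hρ : ∀ n, ρ n = μ {ω | ∀ i ≤ n, 0 ≤ S 0 i ω})
    (x : ℝ) (hx : 0 ≤ x) (n : ℕ) :
    μ {ω | ∀ i ≤ n, 0 ≤ S x i ω} =
      ρ n + ∑ k ∈ Finset.Icc 1 n,
        μ {ω | (∀ j < k, S x k ω < S x j ω) ∧ 0 ≤ S x k ω} * ρ (n - k) := by
  obtain rfl : S = ProbabilityTheory.randomWalk X := by
    ext x n ω
    exact hS x n ω
  have hstart : μ {ω | (∀ j < 0, ProbabilityTheory.randomWalk X x 0 ω <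
      ProbabilityTheory.randomWalk X x j ω) ∧ 0 ≤ ProbabilityTheory.randomWalk X x 0 ω} = 1 := by
    simp [ProbabilityTheory.randomWalk, hx]
  rw [ProbabilityTheory.measure_randomWalk_nonneg hmeas hindep hident x n, range_eq_Ico,
    sum_eq_sum_Ico_succ_bot n.add_one_pos, zero_add, Ico_add_one_right_eq_Icc, hstart, one_mul]
  simp only [hρ, Nat.sub_zero]

/-- First-minimum decomposition for a random walk with i.i.d. increments `X`,
`S_x(n) = x + ∑_{i<n} X i`: for `x ≥ 0` and `n ≥ 1`, writing
`ρ(n) := P(min_{0≤i≤n} S_0(i) ≥ 0)`,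
`P_x(min_{0≤i≤n} S_i ≥ 0) = ρ(n) + ∑_{k=1}^n P_x(min_{0≤j≤k-1} S_j > S_k ≥ 0) ρ(n-k)`. -/
theorem stmt6 {Ω : Type*} [MeasurableSpace Ω] (μ : Measure Ω) [IsProbabilityMeasure μ]
    (X : ℕ → Ω → ℝ) (hmeas : ∀ i, Measurable (X i))
    (hindep : ProbabilityTheory.iIndepFun (m := fun _ => Real.measurableSpace) X μ)
    (hident : ∀ i, ProbabilityTheory.IdentDistrib (X i) (X 0) μ μ)
    (S : ℝ → ℕ → Ω → ℝ) (hS : ∀ x n ω, S x n ω = x + ∑ i ∈ Finset.range n, X i ω)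
    (ρ : ℕ → ℝ≥0∞) (hρ : ∀ n, ρ n = μ {ω | ∀ i ≤ n, 0 ≤ S 0 i ω})
    (x : ℝ) (hx : 0 ≤ x) (n : ℕ) (hn : 1 ≤ n) :
    μ {ω | ∀ i ≤ n, 0 ≤ S x i ω} =
      ρ n + ∑ k ∈ Finset.Icc 1 n,
        μ {ω | (∀ j < k, S x k ω < S x j ω) ∧ 0 ≤ S x k ω} * ρ (n - k) :=
  stmt6_general μ X hmeas hindep hident S hS ρ hρ x hx n
end

section
/- Let (S_n) be a random walk started at x ≥ 0 with renewal function R(x) := ∑_{k=0}^∞ P(S_k ≥ −x, S_k < min_{0≤j≤k−1} S_j) (walk started at 0). Then P_x(min_{0≤i≤n} S_i ≥ 0) ≤ R(x)·ρ(n) + ∑_{k=1}^n P_x(min_{0≤j≤k−1} S_j > S_k ≥ 0)·(ρ(n−k) − ρ(n)), where ρ(n) = P_0(min_{0≤i≤n} S_i ≥ 0). -/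
/-!
Let `k` be the first time at which the walk started at `x` attains its minimum over `[0, n]`. On
the event `min_{i≤n} S_i ≥ 0`, `k` is a strict descending ladder epoch with `S_k ≥ 0`, and the walk
restarted at `k` stays nonnegative for `n - k` steps. The two blocks are independent, so
`P_x(min_{i≤n} S_i ≥ 0) ≤ ∑_{k≤n} p_k(x) ρ(n-k)`, where `p_k(x)` is the `k`-th term of `R(x)`.
Writing `ρ(n-k) = ρ(n) + (ρ(n-k) - ρ(n))` and bounding `∑_{k≤n} p_k(x)` by `R(x)` gives the claim.

The real work is that `R(x)` is finite (a non-summable `tsum` would be `0`). Decomposing a ladder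
epoch at the first time the walk is negative gives a renewal inequality. The first negative value
is `< 0`, so for small `δ` it lies in `(-δ, 0)` with probability at most `1/2`; this yields
`∑_{k≤K} p_k(y) ≤ 2 + 2 ∑_{k≤K} p_k(y - δ)`, and `p_k(y) = 0` for `y < 0`.
-/

open MeasureTheory Finset ProbabilityTheory Filter Topology

namespace RandomWalk

lemma exists_first_min (f : ℕ → ℝ) (n : ℕ) :
    ∃ k ≤ n, (∀ j < k, f k < f j) ∧ ∀ i ≤ n, f k ≤ f i := by
  classical
  have hmin : ∃ k, k ≤ n ∧ ∀ i ≤ n, f k ≤ f i := by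
    obtain ⟨k, hk, hkmin⟩ := (range (n + 1)).exists_min_image f nonempty_range_add_one
    exact ⟨k, by simpa [Nat.lt_succ_iff] using hk,
      fun i hi => hkmin i (mem_range.2 (Nat.lt_succ_of_le hi))⟩
  obtain ⟨hkn, hkmin⟩ := Nat.find_spec hmin
  refine ⟨Nat.find hmin, hkn, fun j hj => ?_, hkmin⟩
  by_contra! hle
  exact Nat.find_min hmin hj ⟨by omega, fun i hi => hle.trans (hkmin i hi)⟩

lemma exists_first_neg {f : ℕ → ℝ} {k : ℕ} (hk : f k < 0) :
    ∃ j ≤ k, (∀ l < j, 0 ≤ f l) ∧ f j < 0 := by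
  classical
  have hneg : ∃ j, f j < 0 := ⟨k, hk⟩
  exact ⟨Nat.find hneg, Nat.find_min' hneg hk, fun l hl => not_lt.1 (Nat.find_min hneg hl),
    Nat.find_spec hneg⟩

lemma eq_of_first_neg {f : ℕ → ℝ} {j j' : ℕ} (h : ∀ l < j, 0 ≤ f l) (hj : f j < 0)
    (h' : ∀ l < j', 0 ≤ f l) (hj' : f j' < 0) : j = j' := by
  by_contra hne
  rcases Nat.lt_or_gt_of_ne hne with hlt | hlt
  · linarith [h' j hlt]
  · linarith [h j' hlt]

lemma sum_range_mul_le_tsum_mul_add {p ρ : ℕ → ℝ} (hp : ∀ k, 0 ≤ p k) (hsum : Summable p)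
    {n : ℕ} (hρ : 0 ≤ ρ n) :
    ∑ k ∈ range (n + 1), p k * ρ (n - k) ≤
      (∑' k, p k) * ρ n + ∑ k ∈ Icc 1 n, p k * (ρ (n - k) - ρ n) :=
  calc ∑ k ∈ range (n + 1), p k * ρ (n - k)
      = (∑ k ∈ range (n + 1), p k) * ρ n + ∑ k ∈ range (n + 1), p k * (ρ (n - k) - ρ n) := by
        rw [sum_mul, ← sum_add_distrib]
        exact sum_congr rfl fun k _ => by ring
    _ = (∑ k ∈ range (n + 1), p k) * ρ n + ∑ k ∈ Icc 1 n, p k * (ρ (n - k) - ρ n) := by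
        congr 1
        rw [range_eq_Ico, sum_eq_sum_Ico_succ_bot n.succ_pos, Nat.sub_zero, sub_self, mul_zero,
          zero_add, zero_add, Nat.succ_eq_add_one, Ico_add_one_right_eq_Icc]
    _ ≤ _ := by
        gcongr
        exact hsum.sum_le_tsum _ fun k _ => hp k

lemma sum_range_sum_range_sub_le {f : ℕ → ℕ → ℝ} (hf : ∀ j i, 0 ≤ f j i) (K : ℕ) :
    ∑ k ∈ range (K + 1), ∑ j ∈ range (k + 1), f j (k - j) ≤
      ∑ j ∈ range (K + 1), ∑ i ∈ range (K + 1), f j i := by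
  rw [sum_comm' (t' := range (K + 1)) (s' := fun j => Ico j (K + 1))
    (by intro k j; simp only [mem_range, mem_Ico]; omega)]
  refine sum_le_sum fun j _ => ?_
  rw [sum_Ico_eq_sum_range]
  simp only [Nat.add_sub_cancel_left]
  exact sum_le_sum_of_subset_of_nonneg (range_mono (by omega)) fun i _ _ => hf j i

variable {Ω : Type*} {X : ℕ → Ω → ℝ}

def walk (X : ℕ → Ω → ℝ) (a : ℕ) (ω : Ω) (d : ℕ) : ℝ := ∑ i ∈ range d, X (a + i) ω

@[simp]
lemma walk_zero (a : ℕ) (ω : Ω) : walk X a ω 0 = 0 := by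
  simp [walk]

lemma walk_add (a j d : ℕ) (ω : Ω) : walk X a ω (j + d) = walk X a ω j + walk X (a + j) ω d := by
  simp only [walk, sum_range_add, add_assoc]

def prefixSum {m : ℕ} (v : Fin m → ℝ) (d : ℕ) : ℝ :=
  ∑ i ∈ univ.filter (fun i : Fin m => (i : ℕ) < d), v i

@[fun_prop]
lemma measurable_prefixSum (m d : ℕ) : Measurable fun v : Fin m → ℝ => prefixSum v d :=
  Finset.measurable_sum _ fun i _ => measurable_pi_apply i

def block (X : ℕ → Ω → ℝ) (a m : ℕ) : Ω → Fin m → ℝ := fun ω i => X (a + i) ω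

lemma prefixSum_block {a m d : ℕ} (hd : d ≤ m) (ω : Ω) :
    prefixSum (block X a m ω) d = walk X a ω d := by
  refine Finset.sum_bij' (fun i _ => i) (fun i hi => ⟨i, (mem_range.1 hi).trans_le hd⟩)
    ?_ ?_ ?_ ?_ ?_ <;> simp [block]

def newMinSet (k : ℕ) (y : ℝ) : Set (Fin k → ℝ) :=
  {v | (∀ j < k, prefixSum v k < prefixSum v j) ∧ -y ≤ prefixSum v k}

def nonnegSet (m : ℕ) : Set (Fin m → ℝ) := {v | ∀ d ≤ m, 0 ≤ prefixSum v d}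

def firstNegSet (j : ℕ) (I : Set ℝ) : Set (Fin j → ℝ) :=
  {v | (∀ l < j, 0 ≤ prefixSum v l) ∧ prefixSum v j < 0 ∧ prefixSum v j ∈ I}

lemma measurableSet_newMinSet (k : ℕ) (y : ℝ) : MeasurableSet (newMinSet k y) := by
  unfold newMinSet; measurability

lemma measurableSet_nonnegSet (m : ℕ) : MeasurableSet (nonnegSet m) := by
  unfold nonnegSet; measurability

lemma measurableSet_firstNegSet (j : ℕ) {I : Set ℝ} (hI : MeasurableSet I) :
    MeasurableSet (firstNegSet j I) := by
  unfold firstNegSet; measurability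

lemma firstNegSet_mono (j : ℕ) {I J : Set ℝ} (hIJ : I ⊆ J) : firstNegSet j I ⊆ firstNegSet j J :=
  fun _ ⟨hnn, hneg, hI⟩ => ⟨hnn, hneg, hIJ hI⟩

lemma preimage_block_newMinSet (a k : ℕ) (y : ℝ) :
    block X a k ⁻¹' newMinSet k y =
      {ω | (∀ j < k, walk X a ω k < walk X a ω j) ∧ -y ≤ walk X a ω k} := by
  ext ω
  simp only [newMinSet, Set.mem_preimage, Set.mem_ofPred_eq, prefixSum_block le_rfl]
  exact and_congr_left' (forall₂_congr fun j hj => by rw [prefixSum_block hj.le])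

lemma preimage_block_nonnegSet (a m : ℕ) :
    block X a m ⁻¹' nonnegSet m = {ω | ∀ d ≤ m, 0 ≤ walk X a ω d} := by
  ext ω
  exact forall₂_congr fun d hd => by rw [prefixSum_block hd]

lemma preimage_block_firstNegSet (a j : ℕ) (I : Set ℝ) :
    block X a j ⁻¹' firstNegSet j I =
      {ω | (∀ l < j, 0 ≤ walk X a ω l) ∧ walk X a ω j < 0 ∧ walk X a ω j ∈ I} := by
  ext ω
  simp only [firstNegSet, Set.mem_preimage, Set.mem_ofPred_eq, prefixSum_block le_rfl]
  exact and_congr_left' (forall₂_congr fun l hl => by rw [prefixSum_block hl.le])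

lemma mem_newMinSet_restart {k j : ℕ} (hj : j ≤ k) {y z : ℝ} {ω : Ω}
    (h : ω ∈ block X 0 k ⁻¹' newMinSet k y) (hz : y + walk X 0 ω j ≤ z) :
    ω ∈ block X j (k - j) ⁻¹' newMinSet (k - j) z := by
  rw [preimage_block_newMinSet] at h ⊢
  obtain ⟨m, rfl⟩ := Nat.exists_eq_add_of_le hj
  have hW (d : ℕ) : walk X 0 ω (j + d) = walk X 0 ω j + walk X j ω d := by
    rw [walk_add, zero_add]
  rw [Nat.add_sub_cancel_left]
  refine ⟨fun d hd => ?_, ?_⟩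
  · have := h.1 (j + d) (by omega)
    rw [hW, hW] at this
    linarith
  · have := h.2
    rw [hW] at this
    linarith

lemma preimage_block_newMinSet_subset {k : ℕ} (hk : 0 < k) (y δ : ℝ) :
    block X 0 k ⁻¹' newMinSet k y ⊆ ⋃ j ∈ range (k + 1),
      (block X 0 j ⁻¹' firstNegSet j (Set.Ioi (-δ)) ∩ block X j (k - j) ⁻¹' newMinSet (k - j) y ∪
        block X 0 j ⁻¹' firstNegSet j (Set.Iic (-δ)) ∩
          block X j (k - j) ⁻¹' newMinSet (k - j) (y - δ)) := by
  intro ω hω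
  have hneg : walk X 0 ω k < 0 := by
    rw [preimage_block_newMinSet] at hω
    simpa using hω.1 0 hk
  obtain ⟨j, hjk, hnn, hj⟩ := exists_first_neg hneg
  have hfirst (I : Set ℝ) (hI : walk X 0 ω j ∈ I) : ω ∈ block X 0 j ⁻¹' firstNegSet j I := by
    rw [preimage_block_firstNegSet]
    exact ⟨hnn, hj, hI⟩
  refine Set.mem_biUnion (mem_range.2 (Nat.lt_succ_of_le hjk)) ?_
  rcases lt_or_ge (-δ) (walk X 0 ω j) with hδ | hδ
  · exact Or.inl ⟨hfirst _ hδ, mem_newMinSet_restart hjk hω (by linarith)⟩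
  · exact Or.inr ⟨hfirst _ hδ, mem_newMinSet_restart hjk hω (by linarith)⟩

lemma setOf_walk_nonneg_subset (x : ℝ) (n : ℕ) :
    {ω | ∀ i ≤ n, 0 ≤ x + walk X 0 ω i} ⊆ ⋃ k ∈ range (n + 1),
      (block X 0 k ⁻¹' newMinSet k x ∩ block X k (n - k) ⁻¹' nonnegSet (n - k)) := by
  intro ω hω
  obtain ⟨k, hkn, hfirst, hmin⟩ := exists_first_min (walk X 0 ω) n
  refine Set.mem_biUnion (mem_range.2 (Nat.lt_succ_of_le hkn)) ⟨?_, ?_⟩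
  · rw [preimage_block_newMinSet]
    exact ⟨hfirst, by linarith [hω k hkn]⟩
  · rw [preimage_block_nonnegSet]
    intro d hd
    have := hmin (k + d) (by omega)
    rw [walk_add, zero_add] at this
    linarith

variable [MeasurableSpace Ω] {μ : Measure Ω}

structure IsIID (μ : Measure Ω) (X : ℕ → Ω → ℝ) : Prop where
  measurable : ∀ i, Measurable (X i)
  indep : iIndepFun X μ
  identDistrib : ∀ i, IdentDistrib (X i) (X 0) μ μ

lemma IsIID.measurable_block (hX : IsIID μ X) (a m : ℕ) : Measurable (block X a m) :=
  measurable_pi_lambda _ fun _ => hX.measurable _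

lemma IsIID.map_block [IsProbabilityMeasure μ] (hX : IsIID μ X) (a m : ℕ) :
    μ.map (block X a m) = Measure.pi fun _ => μ.map (X 0) := by
  have hind : iIndepFun (fun i : Fin m => X (a + i)) μ :=
    hX.indep.precomp fun i j h => Fin.ext (Nat.add_left_cancel h)
  rw [show block X a m = fun ω (i : Fin m) => X (a + i) ω from rfl,
    (iIndepFun_iff_map_fun_eq_pi_map fun i => (hX.measurable _).aemeasurable).1 hind]
  simp_rw [(hX.identDistrib _).map_eq]

lemma IsIID.measureReal_block_preimage [IsProbabilityMeasure μ] (hX : IsIID μ X) (a : ℕ)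
    {m : ℕ} {A : Set (Fin m → ℝ)} (hA : MeasurableSet A) :
    μ.real (block X a m ⁻¹' A) = μ.real (block X 0 m ⁻¹' A) := by
  simp only [Measure.real, ← Measure.map_apply (hX.measurable_block _ _) hA, hX.map_block]

lemma IsIID.indepFun_block (hX : IsIID μ X) (k m : ℕ) :
    IndepFun (block X 0 k) (block X k m) μ := by
  have hdisj : Disjoint (range k) (Ico k (k + m)) := by
    simp +contextual [Finset.disjoint_left]
  convert (hX.indep.indepFun_finset _ _ hdisj hX.measurable).comp
    (φ := fun (v : range k → ℝ) (i : Fin k) => v ⟨i, by simp⟩)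
    (ψ := fun (v : Ico k (k + m) → ℝ) (i : Fin m) => v ⟨k + i, by simp⟩)
    (measurable_pi_lambda _ fun _ => measurable_pi_apply _)
    (measurable_pi_lambda _ fun _ => measurable_pi_apply _) using 1 <;>
  ext ω i <;> simp [block]

lemma IsIID.measureReal_block_inter [IsProbabilityMeasure μ] (hX : IsIID μ X) (k m : ℕ)
    {A : Set (Fin k → ℝ)} {B : Set (Fin m → ℝ)} (hA : MeasurableSet A) (hB : MeasurableSet B) :
    μ.real (block X 0 k ⁻¹' A ∩ block X k m ⁻¹' B)
      = μ.real (block X 0 k ⁻¹' A) * μ.real (block X 0 m ⁻¹' B) := by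
  rw [← hX.measureReal_block_preimage k hB, Measure.real,
    (hX.indepFun_block k m).measure_inter_preimage_eq_mul _ _ hA hB, ENNReal.toReal_mul]
  rfl

/-- `P(S_k < min_{j<k} S_j, S_k ≥ -y)` for the walk `S` started at `0`: the `k`-th term of the
renewal function `R(y)`. -/
def ladderProb (μ : Measure Ω) (X : ℕ → Ω → ℝ) (k : ℕ) (y : ℝ) : ℝ :=
  μ.real (block X 0 k ⁻¹' newMinSet k y)

def firstNegProb (μ : Measure Ω) (X : ℕ → Ω → ℝ) (j : ℕ) (I : Set ℝ) : ℝ :=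
  μ.real (block X 0 j ⁻¹' firstNegSet j I)

lemma ladderProb_of_neg (k : ℕ) {y : ℝ} (hy : y < 0) : ladderProb μ X k y = 0 := by
  rw [ladderProb, preimage_block_newMinSet]
  convert measureReal_empty (μ := μ)
  refine Set.eq_empty_of_forall_notMem fun ω ⟨hmin, hle⟩ => ?_
  rcases k.eq_zero_or_pos with rfl | hk
  · simp only [walk_zero] at hle
    linarith
  · linarith [hmin 0 hk, walk_zero (X := X) 0 ω]

lemma ladderProb_nonneg (k : ℕ) (y : ℝ) : 0 ≤ ladderProb μ X k y := measureReal_nonneg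

lemma firstNegProb_nonneg (j : ℕ) (I : Set ℝ) : 0 ≤ firstNegProb μ X j I := measureReal_nonneg

variable [IsProbabilityMeasure μ]

lemma IsIID.ladderProb_le_sum (hX : IsIID μ X) {k : ℕ} (hk : 0 < k) (y δ : ℝ) :
    ladderProb μ X k y ≤ ∑ j ∈ range (k + 1),
      (firstNegProb μ X j (Set.Ioi (-δ)) * ladderProb μ X (k - j) y +
        firstNegProb μ X j (Set.Iic (-δ)) * ladderProb μ X (k - j) (y - δ)) :=
  calc ladderProb μ X k y
      ≤ μ.real (⋃ j ∈ range (k + 1),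
          (block X 0 j ⁻¹' firstNegSet j (Set.Ioi (-δ)) ∩
              block X j (k - j) ⁻¹' newMinSet (k - j) y ∪
            block X 0 j ⁻¹' firstNegSet j (Set.Iic (-δ)) ∩
              block X j (k - j) ⁻¹' newMinSet (k - j) (y - δ))) :=
        measureReal_mono (preimage_block_newMinSet_subset hk y δ) (measure_ne_top μ _)
    _ ≤ _ := measureReal_biUnion_finset_le _ _
    _ ≤ _ := sum_le_sum fun j _ => (measureReal_union_le _ _).trans_eq <| by
        rw [hX.measureReal_block_inter _ _ (measurableSet_firstNegSet _ measurableSet_Ioi)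
            (measurableSet_newMinSet _ _),
          hX.measureReal_block_inter _ _ (measurableSet_firstNegSet _ measurableSet_Iic)
            (measurableSet_newMinSet _ _)]
        rfl

lemma IsIID.sum_firstNegProb_le (hX : IsIID μ X) (s : Finset ℕ) {I : Set ℝ} (hI : MeasurableSet I) :
    ∑ j ∈ s, firstNegProb μ X j I ≤ μ.real (⋃ j, block X 0 j ⁻¹' firstNegSet j I) := by
  have hdisj : (s : Set ℕ).PairwiseDisjoint fun j => block X 0 j ⁻¹' firstNegSet j I := by
    intro j _ j' _ hne
    refine Set.disjoint_left.2 fun ω h h' => hne ?_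
    simp only [preimage_block_firstNegSet] at h h'
    exact eq_of_first_neg h.1 h.2.1 h'.1 h'.2.1
  unfold firstNegProb
  rw [← measureReal_biUnion_finset hdisj
    fun j _ => hX.measurable_block 0 j (measurableSet_firstNegSet j hI)]
  exact measureReal_mono (Set.iUnion₂_subset_iUnion _ _) (measure_ne_top μ _)

lemma IsIID.exists_sum_firstNegProb_le_half (hX : IsIID μ X) :
    ∃ δ > 0, ∀ K, ∑ j ∈ range K, firstNegProb μ X j (Set.Ioi (-δ)) ≤ 1 / 2 := by
  set D : ℕ → Set Ω := fun r => ⋃ j, block X 0 j ⁻¹' firstNegSet j (Set.Ioi (-(r + 1 : ℝ)⁻¹))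
  have hanti : Antitone D := fun r r' hr => Set.iUnion_mono fun j => Set.preimage_mono <|
    firstNegSet_mono j <| Set.Ioi_subset_Ioi <| neg_le_neg <|
      inv_anti₀ (by positivity) (by gcongr)
  have hempty : ⋂ r, D r = ∅ := by
    refine Set.eq_empty_of_forall_notMem fun ω hω => ?_
    rw [Set.mem_iInter] at hω
    obtain ⟨j, hj⟩ := Set.mem_iUnion.1 (hω 0)
    rw [preimage_block_firstNegSet] at hj
    obtain ⟨r, hr⟩ := exists_nat_one_div_lt (neg_pos.2 hj.2.1)
    obtain ⟨j', hj'⟩ := Set.mem_iUnion.1 (hω r)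
    rw [preimage_block_firstNegSet] at hj'
    obtain rfl := eq_of_first_neg hj.1 hj.2.1 hj'.1 hj'.2.1
    have := Set.mem_Ioi.1 hj'.2.2
    rw [one_div] at hr
    linarith
  have hlim : Tendsto (fun r => μ.real (D r)) atTop (𝓝 0) := by
    have := tendsto_measure_iInter_atTop (fun r => (MeasurableSet.iUnion fun j =>
      hX.measurable_block 0 j (measurableSet_firstNegSet j measurableSet_Ioi)).nullMeasurableSet)
      hanti ⟨0, measure_ne_top μ _⟩
    rw [hempty, measure_empty] at this
    exact (ENNReal.tendsto_toReal ENNReal.zero_ne_top).comp this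
  obtain ⟨r, hr⟩ := (hlim.eventually (gt_mem_nhds (show (0 : ℝ) < 1 / 2 by norm_num))).exists
  exact ⟨(r + 1 : ℝ)⁻¹, by positivity,
    fun K => (hX.sum_firstNegProb_le _ measurableSet_Ioi).trans hr.le⟩

lemma IsIID.sum_ladderProb_le (hX : IsIID μ X) {δ : ℝ}
    (hδ : ∀ K, ∑ j ∈ range K, firstNegProb μ X j (Set.Ioi (-δ)) ≤ 1 / 2) (K : ℕ) (y : ℝ) :
    ∑ k ∈ range (K + 1), ladderProb μ X k y ≤
      2 + 2 * ∑ k ∈ range (K + 1), ladderProb μ X k (y - δ) := by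
  set F := fun z => ∑ k ∈ range (K + 1), ladderProb μ X k z
  set a := fun j => firstNegProb μ X j (Set.Ioi (-δ))
  set b := fun j => firstNegProb μ X j (Set.Iic (-δ))
  have hterm (j i : ℕ) : 0 ≤ a j * ladderProb μ X i y + b j * ladderProb μ X i (y - δ) :=
    add_nonneg (mul_nonneg (firstNegProb_nonneg _ _) (ladderProb_nonneg _ _))
      (mul_nonneg (firstNegProb_nonneg _ _) (ladderProb_nonneg _ _))
  have hstep (k : ℕ) : ladderProb μ X k y ≤ (if k = 0 then 1 else 0) + ∑ j ∈ range (k + 1),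
      (a j * ladderProb μ X (k - j) y + b j * ladderProb μ X (k - j) (y - δ)) := by
    rcases k.eq_zero_or_pos with rfl | hk
    · exact measureReal_le_one.trans (le_add_of_nonneg_right (sum_nonneg fun j _ => hterm j _))
    · simpa [hk.ne'] using hX.ladderProb_le_sum hk y δ
  have hb : ∑ j ∈ range (K + 1), b j ≤ 1 :=
    (hX.sum_firstNegProb_le _ measurableSet_Iic).trans measureReal_le_one
  have hF :
      F y ≤ 1 + (∑ j ∈ range (K + 1), a j) * F y + (∑ j ∈ range (K + 1), b j) * F (y - δ) :=
    calc F y ≤ ∑ k ∈ range (K + 1), ((if k = 0 then 1 else 0) + ∑ j ∈ range (k + 1),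
          (a j * ladderProb μ X (k - j) y + b j * ladderProb μ X (k - j) (y - δ))) :=
          sum_le_sum fun k _ => hstep k
      _ = 1 + ∑ k ∈ range (K + 1), ∑ j ∈ range (k + 1),
          (a j * ladderProb μ X (k - j) y + b j * ladderProb μ X (k - j) (y - δ)) := by
          simp [sum_add_distrib]
      _ ≤ 1 + ∑ j ∈ range (K + 1), ∑ i ∈ range (K + 1),
          (a j * ladderProb μ X i y + b j * ladderProb μ X i (y - δ)) := by
          exact add_le_add le_rfl (sum_range_sum_range_sub_le
            (f := fun j i => a j * ladderProb μ X i y + b j * ladderProb μ X i (y - δ)) hterm K)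
      _ = _ := by simp only [sum_add_distrib, ← mul_sum, ← sum_mul, F, add_assoc]
  have hFnonneg (z : ℝ) : 0 ≤ F z := sum_nonneg fun k _ => ladderProb_nonneg k z
  show F y ≤ 2 + 2 * F (y - δ)
  nlinarith [mul_le_mul_of_nonneg_right (hδ (K + 1)) (hFnonneg y),
    mul_le_mul_of_nonneg_right hb (hFnonneg (y - δ))]

lemma IsIID.summable_ladderProb (hX : IsIID μ X) (y : ℝ) :
    Summable fun k => ladderProb μ X k y := by
  obtain ⟨δ, hδpos, hδ⟩ := hX.exists_sum_firstNegProb_le_half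
  have hbound (L : ℕ) : ∀ y < L * δ, ∀ K,
      ∑ k ∈ range (K + 1), ladderProb μ X k y ≤ 2 ^ (L + 1) - 2 := by
    induction L with
    | zero =>
      intro y hy K
      rw [sum_eq_zero fun k _ => ladderProb_of_neg k (by simpa using hy)]
      norm_num
    | succ L ih =>
      intro y hy K
      have := ih (y - δ) (by push_cast at hy; linarith) K
      have := hX.sum_ladderProb_le hδ K y
      rw [pow_succ]
      linarith
  obtain ⟨L, hL⟩ := exists_nat_gt (y / δ)
  refine summable_of_sum_range_le (c := 2 ^ (L + 1) - 2) (ladderProb_nonneg · y) fun K => ?_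
  exact (sum_le_sum_of_subset_of_nonneg (range_mono K.le_succ)
    fun k _ _ => ladderProb_nonneg k y).trans (hbound L y (by rwa [div_lt_iff₀ hδpos] at hL) K)

lemma IsIID.measureReal_walk_nonneg_le (hX : IsIID μ X) (x : ℝ) (n : ℕ) :
    μ.real {ω | ∀ i ≤ n, 0 ≤ x + walk X 0 ω i} ≤
      ∑ k ∈ range (n + 1),
        ladderProb μ X k x * μ.real (block X 0 (n - k) ⁻¹' nonnegSet (n - k)) :=
  calc μ.real {ω | ∀ i ≤ n, 0 ≤ x + walk X 0 ω i}
      ≤ μ.real (⋃ k ∈ range (n + 1),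
          (block X 0 k ⁻¹' newMinSet k x ∩ block X k (n - k) ⁻¹' nonnegSet (n - k))) :=
        measureReal_mono (setOf_walk_nonneg_subset x n) (measure_ne_top μ _)
    _ ≤ _ := measureReal_biUnion_finset_le _ _
    _ = _ := sum_congr rfl fun _ _ =>
        hX.measureReal_block_inter _ _ (measurableSet_newMinSet _ _) (measurableSet_nonnegSet _)

end RandomWalk

open RandomWalk

theorem stmt7_general {Ω : Type*} [MeasurableSpace Ω] (μ : Measure Ω) [IsProbabilityMeasure μ]
    (X : ℕ → Ω → ℝ) (hmeas : ∀ i, Measurable (X i))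
    (hindep : ProbabilityTheory.iIndepFun (m := fun _ => Real.measurableSpace) X μ)
    (hident : ∀ i, ProbabilityTheory.IdentDistrib (X i) (X 0) μ μ)
    (S : ℝ → ℕ → Ω → ℝ) (hS : ∀ x n ω, S x n ω = x + ∑ i ∈ Finset.range n, X i ω)
    (ρ : ℕ → ℝ) (hρ : ∀ n, ρ n = (μ {ω | ∀ i ≤ n, 0 ≤ S 0 i ω}).toReal)
    (R : ℝ → ℝ)
    (hR : ∀ x, R x =
      ∑' k : ℕ, (μ {ω | -x ≤ S 0 k ω ∧ ∀ j < k, S 0 k ω < S 0 j ω}).toReal)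
    (x : ℝ) (n : ℕ) :
    (μ {ω | ∀ i ≤ n, 0 ≤ S x i ω}).toReal ≤
      R x * ρ n + ∑ k ∈ Finset.Icc 1 n,
        (μ {ω | (∀ j < k, S x k ω < S x j ω) ∧ 0 ≤ S x k ω}).toReal * (ρ (n - k) - ρ n) := by
  have hX : IsIID μ X := ⟨hmeas, hindep, hident⟩
  have hS' (y : ℝ) (k : ℕ) (ω : Ω) : S y k ω = y + walk X 0 ω k := by simp [hS, walk]
  have hρ' (m : ℕ) : ρ m = μ.real (block X 0 m ⁻¹' nonnegSet m) := by
    simp [hρ, preimage_block_nonnegSet, hS', Measure.real]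
  have hR' : R x = ∑' k, ladderProb μ X k x := by
    simp only [hR, ladderProb, preimage_block_newMinSet, hS', zero_add, and_comm, Measure.real]
  have hladder (k : ℕ) : (μ {ω | (∀ j < k, S x k ω < S x j ω) ∧ 0 ≤ S x k ω}).toReal =
      ladderProb μ X k x := by
    simp [ladderProb, preimage_block_newMinSet, hS', Measure.real, neg_le_iff_add_nonneg']
  simp only [hladder, hR']
  calc (μ {ω | ∀ i ≤ n, 0 ≤ S x i ω}).toReal
      ≤ ∑ k ∈ range (n + 1), ladderProb μ X k x * ρ (n - k) := by
        simpa [hS', hρ', Measure.real] using hX.measureReal_walk_nonneg_le x n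
    _ ≤ _ := sum_range_mul_le_tsum_mul_add (ladderProb_nonneg · x) (hX.summable_ladderProb x)
        (by rw [hρ']; exact measureReal_nonneg)

/-- With `R(x) := ∑_{k≥0} P(S_k ≥ -x, S_k < min_{0≤j≤k-1} S_j)` (walk started at `0`) and
`ρ(n) := P(min_{0≤i≤n} S_i ≥ 0)`, one has for `x ≥ 0`, `n ≥ 1`:
`P_x(min_{0≤i≤n} S_i ≥ 0) ≤ R(x) ρ(n) + ∑_{k=1}^n P_x(min_{0≤j≤k-1} S_j > S_k ≥ 0)(ρ(n-k) - ρ(n))`. -/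
theorem stmt7 {Ω : Type*} [MeasurableSpace Ω] (μ : Measure Ω) [IsProbabilityMeasure μ]
    (X : ℕ → Ω → ℝ) (hmeas : ∀ i, Measurable (X i))
    (hindep : ProbabilityTheory.iIndepFun (m := fun _ => Real.measurableSpace) X μ)
    (hident : ∀ i, ProbabilityTheory.IdentDistrib (X i) (X 0) μ μ)
    (S : ℝ → ℕ → Ω → ℝ) (hS : ∀ x n ω, S x n ω = x + ∑ i ∈ Finset.range n, X i ω)
    (ρ : ℕ → ℝ) (hρ : ∀ n, ρ n = (μ {ω | ∀ i ≤ n, 0 ≤ S 0 i ω}).toReal)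
    (R : ℝ → ℝ)
    (hR : ∀ x, R x =
      ∑' k : ℕ, (μ {ω | -x ≤ S 0 k ω ∧ ∀ j < k, S 0 k ω < S 0 j ω}).toReal)
    (x : ℝ) (hx : 0 ≤ x) (n : ℕ) (hn : 1 ≤ n) :
    (μ {ω | ∀ i ≤ n, 0 ≤ S x i ω}).toReal ≤
      R x * ρ n + ∑ k ∈ Finset.Icc 1 n,
        (μ {ω | (∀ j < k, S x k ω < S x j ω) ∧ 0 ≤ S x k ω}).toReal * (ρ (n - k) - ρ n) :=
  stmt7_general μ X hmeas hindep hident S hS ρ hρ R hR x n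
end
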